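/- arXiv:1502.01796 — 3 statements merged into one kernel-verified Lean document; each statement's English description precedes it below -/
import Mathlib

section
/- For ε, b > 0 and each j = 1,2,3,4,5 there is a constant c = c(j,ε,b) such that |χ⁽ʲ⁾(x;ε,b)| ≤ c·χ'(x; ε/3, b+ε) for all x ∈ [ε, b+ε]. -/
/-!
Since ρ(0) = 0 and ρ(1) = 1, the cutoff is χ(x; α, β) = ρ(c((x - α) / β)) with
c(t) = max 0 (min t 1). As ρ' = 2772 y⁵(1 - y)⁵ vanishes to order 5 at 0 and 1, this composite
is C⁵ with j-th derivative β⁻ʲ ρ⁽ʲ⁾(c((x - α) / β)), a continuous function. On the compact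
interval [ε, b + ε] the derivative χ'(·; ε/3, b + ε) is continuous and strictly positive, so
the quotient χ⁽ʲ⁾(·; ε, b) / χ'(·; ε/3, b + ε) is bounded there.
-/

open MeasureTheory intervalIntegral Set Polynomial

theorem iteratedDeriv_eq_of_hasDerivAt {𝕜 E : Type*} [NontriviallyNormedField 𝕜]
    [NormedAddCommGroup E] [NormedSpace 𝕜 E] {F : ℕ → 𝕜 → E} {n : ℕ}
    (hF : ∀ k < n, ∀ x, HasDerivAt (F k) (F (k + 1) x) x) :
    ∀ k ≤ n, iteratedDeriv k (F 0) = F k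
  | 0, _ => iteratedDeriv_zero
  | k + 1, hk => by
    rw [iteratedDeriv_succ, iteratedDeriv_eq_of_hasDerivAt hF k (by omega)]
    exact funext fun x => (hF k hk x).deriv

theorem Polynomial.iteratedDeriv_eval {𝕜 : Type*} [NontriviallyNormedField 𝕜] (p : 𝕜[X])
    (k : ℕ) : iteratedDeriv k (fun x => p.eval x) = fun x => (derivative^[k] p).eval x :=
  iteratedDeriv_eq_of_hasDerivAt (F := fun k x => (derivative^[k] p).eval x) (n := k)
    (fun j _ x => by simpa only [Function.iterate_succ_apply'] using
      (derivative^[j] p).hasDerivAt x) k le_rfl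

theorem Polynomial.iteratedDeriv_eval_eq_zero_of_lt_rootMultiplicity {𝕜 : Type*}
    [NontriviallyNormedField 𝕜] {p : 𝕜[X]} {a : 𝕜} {k : ℕ} (hk : k < p.rootMultiplicity a) :
    iteratedDeriv k (fun x => p.eval x) a = 0 := by
  rw [p.iteratedDeriv_eval]
  exact isRoot_iterate_derivative_of_lt_rootMultiplicity hk

section Clamp

variable {E : Type*} [NormedAddCommGroup E] [NormedSpace ℝ E] {f f' : ℝ → E}

theorem hasDerivAt_comp_max {a : ℝ} (hf : ∀ x, HasDerivAt f (f' x) x)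
    (ha : f' a = 0) (t : ℝ) : HasDerivAt (fun t => f (max a t)) (f' (max a t)) t := by
  rcases lt_trichotomy t a with h | rfl | h
  · rw [max_eq_left h.le, ha]
    refine (hasDerivAt_const t (f a)).congr_of_eventuallyEq ?_
    filter_upwards [Iio_mem_nhds h] with s hs
    rw [max_eq_left (le_of_lt hs)]
  · have hleft : HasDerivWithinAt (fun s => f (max t s)) 0 (Iic t) t :=
      (hasDerivWithinAt_const t _ (f t)).congr (fun s hs => by rw [max_eq_left hs]) (by simp)
    have hright : HasDerivWithinAt (fun s => f (max t s)) 0 (Ici t) t :=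
      ha ▸ (hf t).hasDerivWithinAt.congr (fun s hs => by rw [max_eq_right hs]) (by simp)
    have h := hleft.union hright
    rw [Iic_union_Ici, hasDerivWithinAt_univ] at h
    simpa [ha] using h
  · rw [max_eq_right h.le]
    refine (hf t).congr_of_eventuallyEq ?_
    filter_upwards [Ioi_mem_nhds h] with s hs
    rw [max_eq_right (le_of_lt hs)]

theorem hasDerivAt_comp_min {b : ℝ} (hf : ∀ x, HasDerivAt f (f' x) x)
    (hb : f' b = 0) (t : ℝ) : HasDerivAt (fun t => f (min t b)) (f' (min t b)) t := by
  rcases lt_trichotomy t b with h | rfl | h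
  · rw [min_eq_left h.le]
    refine (hf t).congr_of_eventuallyEq ?_
    filter_upwards [Iio_mem_nhds h] with s hs
    rw [min_eq_left (le_of_lt hs)]
  · have hleft : HasDerivWithinAt (fun s => f (min s t)) 0 (Iic t) t :=
      hb ▸ (hf t).hasDerivWithinAt.congr (fun s hs => by rw [min_eq_left hs]) (by simp)
    have hright : HasDerivWithinAt (fun s => f (min s t)) 0 (Ici t) t :=
      (hasDerivWithinAt_const t _ (f t)).congr (fun s hs => by rw [min_eq_right hs]) (by simp)
    have h := hleft.union hright
    rw [Iic_union_Ici, hasDerivWithinAt_univ] at h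
    simpa [hb] using h
  · rw [min_eq_right h.le, hb]
    refine (hasDerivAt_const t (f b)).congr_of_eventuallyEq ?_
    filter_upwards [Ioi_mem_nhds h] with s hs
    rw [min_eq_right (le_of_lt hs)]

theorem hasDerivAt_comp_max_min {a b : ℝ} (hf : ∀ x, HasDerivAt f (f' x) x)
    (ha : f' a = 0) (hb : f' b = 0) (t : ℝ) :
    HasDerivAt (fun t => f (max a (min t b))) (f' (max a (min t b))) t :=
  hasDerivAt_comp_min (f := fun s => f (max a s)) (hasDerivAt_comp_max hf ha)
    (by rcases le_total a b with h | h <;> simp [h, ha, hb]) t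

end Clamp

theorem IsCompact.exists_abs_le_mul {X : Type*} [TopologicalSpace X] {K : Set X}
    {f g : X → ℝ} (hK : IsCompact K)
    (hf : ContinuousOn f K) (hg : ContinuousOn g K) (hpos : ∀ x ∈ K, 0 < g x) :
    ∃ c : ℝ, ∀ x ∈ K, |f x| ≤ c * g x := by
  obtain ⟨c, hc⟩ := hK.exists_bound_of_continuousOn (hf.div hg fun x hx => (hpos x hx).ne')
  refine ⟨c, fun x hx => ?_⟩
  have := hc x hx
  rwa [Pi.div_apply, norm_div, Real.norm_eq_abs, Real.norm_eq_abs, abs_of_pos (hpos x hx),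
    div_le_iff₀ (hpos x hx)] at this

noncomputable def rho (x : ℝ) : ℝ := 2772 * ∫ y in (0:ℝ)..x, y ^ 5 * (1 - y) ^ 5

noncomputable def rhoDeriv : ℝ[X] := C 2772 * X ^ 5 * (1 - X) ^ 5

theorem hasDerivAt_rho (x : ℝ) : HasDerivAt rho (rhoDeriv.eval x) x := by
  have hcont : Continuous fun y : ℝ => y ^ 5 * (1 - y) ^ 5 := by fun_prop
  have h : HasDerivAt rho _ x := (hcont.integral_hasStrictDerivAt 0 x).hasDerivAt.const_mul 2772
  convert h using 1
  simp [rhoDeriv, mul_assoc]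

theorem deriv_rho : deriv rho = fun x => rhoDeriv.eval x :=
  funext fun x => (hasDerivAt_rho x).deriv

theorem rho_zero : rho 0 = 0 := by simp [rho]

theorem rho_one : rho 1 = 1 := by
  have hexpand : (fun y : ℝ => y ^ 5 * (1 - y) ^ 5) =
      fun y => y ^ 5 - 5 * y ^ 6 + 10 * y ^ 7 - 10 * y ^ 8 + 5 * y ^ 9 - y ^ 10 := by
    funext y; ring
  rw [rho, hexpand]
  simp (disch := apply Continuous.intervalIntegrable; fun_prop) only
    [intervalIntegral.integral_sub, intervalIntegral.integral_add,
      intervalIntegral.integral_const_mul, integral_pow]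
  norm_num

theorem contDiff_rho : ContDiff ℝ (⊤ : ℕ∞) rho :=
  contDiff_infty_iff_deriv.2
    ⟨fun x => (hasDerivAt_rho x).differentiableAt,
      by simpa [deriv_rho] using rhoDeriv.contDiff_aeval (𝕜 := ℝ) _⟩

theorem rhoDeriv_ne_zero : rhoDeriv ≠ 0 := fun h => by
  have := congrArg (eval (1 / 2)) h
  norm_num [rhoDeriv] at this

theorem five_le_rootMultiplicity_zero_rhoDeriv : 5 ≤ rhoDeriv.rootMultiplicity 0 :=
  (le_rootMultiplicity_iff rhoDeriv_ne_zero).2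
    ⟨C 2772 * (1 - X) ^ 5, by simp only [rhoDeriv, map_zero, sub_zero]; ring⟩

theorem five_le_rootMultiplicity_one_rhoDeriv : 5 ≤ rhoDeriv.rootMultiplicity 1 :=
  (le_rootMultiplicity_iff rhoDeriv_ne_zero).2
    ⟨-(C 2772 * X ^ 5), by simp only [rhoDeriv, map_one]; ring⟩

theorem iteratedDeriv_rho_eq_zero {a : ℝ} (ha : 5 ≤ rhoDeriv.rootMultiplicity a) {k : ℕ}
    (hk₁ : 1 ≤ k) (hk₅ : k ≤ 5) : iteratedDeriv k rho a = 0 := by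
  obtain ⟨k, rfl⟩ := Nat.exists_eq_add_of_le' hk₁
  rw [iteratedDeriv_succ', deriv_rho]
  exact iteratedDeriv_eval_eq_zero_of_lt_rootMultiplicity (by omega)

theorem hasDerivAt_iteratedDeriv_rho_clamp {k : ℕ} (hk : k < 5) (t : ℝ) :
    HasDerivAt (fun t => iteratedDeriv k rho (max 0 (min t 1)))
      (iteratedDeriv (k + 1) rho (max 0 (min t 1))) t := by
  refine hasDerivAt_comp_max_min (fun x => ?_)
    (iteratedDeriv_rho_eq_zero five_le_rootMultiplicity_zero_rhoDeriv le_add_self hk)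
    (iteratedDeriv_rho_eq_zero five_le_rootMultiplicity_one_rhoDeriv le_add_self hk) t
  rw [iteratedDeriv_succ]
  exact (contDiff_rho.differentiable_iteratedDeriv k (mod_cast ENat.natCast_lt_top k) x).hasDerivAt

noncomputable def cutoff (α β x : ℝ) : ℝ := rho (max 0 (min ((x - α) / β) 1))

theorem cutoff_eq_ite {α β : ℝ} (hβ : 0 < β) (x : ℝ) :
    cutoff α β x = if x ≤ α then 0 else if x < β + α then rho ((x - α) / β) else 1 := by
  rw [cutoff]
  split_ifs with h₀ h₁
  · have ht : (x - α) / β ≤ 0 := div_nonpos_of_nonpos_of_nonneg (by linarith) hβ.le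
    rw [max_eq_left ((min_le_left _ _).trans ht), rho_zero]
  · have ht₀ : 0 < (x - α) / β := div_pos (by linarith) hβ
    have ht₁ : (x - α) / β < 1 := (div_lt_one hβ).2 (by linarith)
    rw [min_eq_left ht₁.le, max_eq_right ht₀.le]
  · have ht : 1 ≤ (x - α) / β := (one_le_div hβ).2 (by linarith)
    rw [min_eq_right ht, max_eq_right zero_le_one, rho_one]

theorem iteratedDeriv_cutoff (α β : ℝ) {k : ℕ} (hk : k ≤ 5) :
    iteratedDeriv k (cutoff α β) =
      fun x => (β⁻¹) ^ k * iteratedDeriv k rho (max 0 (min ((x - α) / β) 1)) := by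
  have hcutoff : cutoff α β =
      fun x => (β⁻¹) ^ 0 * iteratedDeriv 0 rho (max 0 (min ((x - α) / β) 1)) := by
    ext x; simp [cutoff]
  rw [hcutoff]
  refine iteratedDeriv_eq_of_hasDerivAt
    (F := fun k x => (β⁻¹) ^ k * iteratedDeriv k rho (max 0 (min ((x - α) / β) 1)))
    (fun j hj x => ?_) k hk
  have hinner : HasDerivAt (fun x => (x - α) / β) β⁻¹ x := by
    simpa using ((hasDerivAt_id x).sub_const α).div_const β
  have h := ((hasDerivAt_iteratedDeriv_rho_clamp hj _).comp x hinner).const_mul ((β⁻¹) ^ j)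
  exact h.congr_deriv (by ring)

theorem continuous_iteratedDeriv_cutoff (α β : ℝ) {k : ℕ} (hk : k ≤ 5) :
    Continuous (iteratedDeriv k (cutoff α β)) := by
  rw [iteratedDeriv_cutoff α β hk]
  have := contDiff_rho.continuous_iteratedDeriv k (by exact_mod_cast le_top)
  fun_prop

theorem deriv_cutoff_pos {α β x : ℝ} (hβ : 0 < β) (hα : α < x) (hx : x < α + β) :
    0 < deriv (cutoff α β) x := by
  have ht₀ : 0 < (x - α) / β := div_pos (by linarith) hβ
  have ht₁ : (x - α) / β < 1 := (div_lt_one hβ).2 (by linarith)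
  rw [← iteratedDeriv_one, iteratedDeriv_cutoff α β (by norm_num), iteratedDeriv_one, deriv_rho]
  dsimp only
  rw [min_eq_left ht₁.le, max_eq_right ht₀.le]
  have : 0 < 1 - (x - α) / β := by linarith
  simp only [rhoDeriv, eval_mul, eval_pow, eval_C, eval_X, eval_sub, eval_one]
  positivity

theorem stmt_5 (ε b : ℝ) (hε : 0 < ε) (hb : 0 < b)
    (ρ : ℝ → ℝ) (χ : ℝ → ℝ → ℝ → ℝ)
    (hρ : ∀ x : ℝ, ρ x = 2772 * ∫ y in (0:ℝ)..x, y ^ 5 * (1 - y) ^ 5)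
    (hχ : ∀ α β x : ℝ, 0 < α → 0 < β → χ α β x =
      if x ≤ α then 0 else if x < β + α then ρ ((x - α) / β) else 1) :
    ∀ j : ℕ, 1 ≤ j → j ≤ 5 →
      ∃ c : ℝ, ∀ x ∈ Set.Icc ε (b + ε),
        |iteratedDeriv j (χ ε b) x| ≤ c * deriv (χ (ε / 3) (b + ε)) x := by
  intro j _ hj
  have hχ_cutoff (α β : ℝ) (hα : 0 < α) (hβ : 0 < β) : χ α β = cutoff α β := by
    ext x
    rw [hχ α β x hα hβ, cutoff_eq_ite hβ, funext hρ, rho]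
  rw [hχ_cutoff ε b hε hb, hχ_cutoff (ε / 3) (b + ε) (by positivity) (by positivity)]
  have hderiv : Continuous (deriv (cutoff (ε / 3) (b + ε))) := by
    simpa using continuous_iteratedDeriv_cutoff (ε / 3) (b + ε) (k := 1) (by norm_num)
  exact isCompact_Icc.exists_abs_le_mul (continuous_iteratedDeriv_cutoff ε b hj).continuousOn
    hderiv.continuousOn fun x hx =>
      deriv_cutoff_pos (by positivity) (by linarith [hx.1]) (by linarith [hx.2])
end

section
/- For ε, b > 0 there is a constant c = c(ε,b) such that (χ'''(x;ε,b))²/χ'(x;ε,b) ≤ c·χ'(x; ε/3, b+ε) for all x ∈ (ε, b+ε), where χ is the C⁵ cutoff constructed from ρ(x) = 2772 ∫₀ˣ y⁵(1−y)⁵ dy. -/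
open MeasureTheory intervalIntegral Set
open scoped ContDiff

/-!
On `(α, β + α)` the cutoff is `ρ ∘ A` with `A x = (x - α) / β`, so with `w(y) = y⁵(1-y)⁵` and
`t = A x` we have `χ' = 2772 w(t) / β` and `χ''' = 2772 w''(t) / β³`. The weight `w` vanishes
to order 5 at both ends while `w''` vanishes only to order 3, and indeed `(w'')² ≤ 100 w` on
`[0, 1]`; hence `(χ''')² / χ' ≤ 277200 / β⁵`. On the other hand `[ε, b + ε]` lies strictly
inside the transition interval `(ε/3, b + ε + ε/3)` of the wider cutoff, whose derivative is
therefore bounded below there by a positive constant.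
-/

/-- `2772 * betaWeight` is the density of the Beta(6, 6) distribution, so `ρ` is its CDF. -/
def betaWeight (y : ℝ) : ℝ := y ^ 5 * (1 - y) ^ 5

lemma hasDerivAt_betaWeight (y : ℝ) :
    HasDerivAt betaWeight (5 * y ^ 4 * (1 - y) ^ 4 * (1 - 2 * y)) y := by
  have h : HasDerivAt (fun y : ℝ => y ^ 5 * (1 - y) ^ 5) _ y :=
    (hasDerivAt_pow 5 y).mul (((hasDerivAt_id y).const_sub 1).pow 5)
  exact h.congr_deriv (by simp only [id]; ring)

lemma iteratedDeriv_two_betaWeight (y : ℝ) :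
    iteratedDeriv 2 betaWeight y =
      y ^ 3 * (1 - y) ^ 3 * (20 * (1 - 2 * y) ^ 2 - 10 * y * (1 - y)) := by
  have hd : deriv betaWeight = fun y => 5 * y ^ 4 * (1 - y) ^ 4 * (1 - 2 * y) :=
    funext fun y => (hasDerivAt_betaWeight y).deriv
  have h1 : HasDerivAt (fun y : ℝ => 1 - y) (-1) y := by
    simpa using (hasDerivAt_id y).const_sub 1
  have h : HasDerivAt (fun y : ℝ => 5 * y ^ 4 * (1 - y) ^ 4 * (1 - 2 * y)) _ y :=
    (((hasDerivAt_pow 4 y).const_mul 5).mul (h1.pow 4)).mul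
      (((hasDerivAt_id y).const_mul 2).const_sub 1)
  rw [iteratedDeriv_succ, iteratedDeriv_one, hd, h.deriv]
  simp only [Pi.mul_apply, Pi.pow_apply]; ring

lemma betaWeight_nonneg {t : ℝ} (ht₀ : 0 ≤ t) (ht₁ : t ≤ 1) : 0 ≤ betaWeight t := by
  have := sub_nonneg.2 ht₁
  unfold betaWeight; positivity

/-- With `u = t(1-t) ∈ [0, 1/4]` the last factor of `betaWeight''` is `20 - 90u ∈ [-5/2, 20]`. -/
lemma sq_iteratedDeriv_two_betaWeight_le {t : ℝ} (ht₀ : 0 ≤ t) (ht₁ : t ≤ 1) :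
    (iteratedDeriv 2 betaWeight t) ^ 2 ≤ 100 * betaWeight t := by
  have hu : 0 ≤ t * (1 - t) := mul_nonneg ht₀ (by linarith)
  have hu' : t * (1 - t) ≤ 1 / 4 := by nlinarith [sq_nonneg (2 * t - 1)]
  have hg : (20 * (1 - 2 * t) ^ 2 - 10 * t * (1 - t)) ^ 2 ≤ 400 := by nlinarith
  calc (iteratedDeriv 2 betaWeight t) ^ 2
      = betaWeight t * (t * (1 - t) * (20 * (1 - 2 * t) ^ 2 - 10 * t * (1 - t)) ^ 2) := by
        rw [iteratedDeriv_two_betaWeight, betaWeight]; ring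
    _ ≤ betaWeight t * (1 / 4 * 400) := by gcongr; exact betaWeight_nonneg ht₀ ht₁
    _ = 100 * betaWeight t := by ring

lemma pow_mul_pow_le_betaWeight {a a' t : ℝ} (ha : 0 ≤ a) (ha' : 0 ≤ a')
    (hat : a ≤ t) (hat' : a' ≤ 1 - t) : a ^ 5 * a' ^ 5 ≤ betaWeight t := by
  have := ha.trans hat
  unfold betaWeight; gcongr

section AffineRescaling

variable {𝕜 : Type*} [NontriviallyNormedField 𝕜] {n : ℕ} {f g : 𝕜 → 𝕜}

lemma iteratedDeriv_comp_div_sub (hf : ContDiff 𝕜 n f) (α β x : 𝕜) :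
    iteratedDeriv n (fun z => f ((z - α) / β)) x =
      (β⁻¹) ^ n * iteratedDeriv n f ((x - α) / β) := by
  have := congrFun (iteratedDeriv_comp_sub_const n (fun z => f (β⁻¹ * z)) α) x
  simp only [iteratedDeriv_comp_const_mul hf] at this
  simpa only [div_eq_inv_mul] using this

lemma iteratedDeriv_eq_of_eqOn_comp_div_sub {s : Set 𝕜} {α β x : 𝕜} (hf : ContDiff 𝕜 n f)
    (hs : IsOpen s) (hg : EqOn g (fun z => f ((z - α) / β)) s) (hx : x ∈ s) :
    iteratedDeriv n g x = (β⁻¹) ^ n * iteratedDeriv n f ((x - α) / β) := by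
  rw [hg.iteratedDeriv_of_isOpen hs n hx, iteratedDeriv_comp_div_sub hf]

end AffineRescaling

section Cutoff

variable {ρ g : ℝ → ℝ} {α β x : ℝ}

lemma hasDerivAt_of_eq_integral_betaWeight
    (hρ : ∀ x : ℝ, ρ x = 2772 * ∫ y in (0:ℝ)..x, y ^ 5 * (1 - y) ^ 5) (y : ℝ) :
    HasDerivAt ρ (2772 * betaWeight y) y := by
  have hcont : Continuous fun y : ℝ => y ^ 5 * (1 - y) ^ 5 := by fun_prop
  rw [funext hρ]
  exact ((hcont.integral_hasStrictDerivAt 0 y).hasDerivAt).const_mul 2772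

lemma contDiff_of_hasDerivAt_betaWeight (hρ : ∀ y, HasDerivAt ρ (2772 * betaWeight y) y) :
    ContDiff ℝ ∞ ρ := by
  rw [contDiff_infty_iff_deriv]
  refine ⟨fun y => (hρ y).differentiableAt, ?_⟩
  rw [show deriv ρ = fun y => 2772 * betaWeight y from funext fun y => (hρ y).deriv]
  unfold betaWeight; fun_prop

lemma iteratedDeriv_three_eq_of_hasDerivAt_betaWeight
    (hρ : ∀ y, HasDerivAt ρ (2772 * betaWeight y) y) (y : ℝ) :
    iteratedDeriv 3 ρ y = 2772 * iteratedDeriv 2 betaWeight y := by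
  rw [iteratedDeriv_succ', show deriv ρ = fun y => 2772 * betaWeight y from
    funext fun y => (hρ y).deriv, iteratedDeriv_const_mul_field]

lemma deriv_eq_of_eqOn_comp_div_sub (hρ : ∀ y, HasDerivAt ρ (2772 * betaWeight y) y)
    (hg : EqOn g (fun z => ρ ((z - α) / β)) (Ioo α (β + α))) (hx : x ∈ Ioo α (β + α)) :
    deriv g x = 2772 * betaWeight ((x - α) / β) / β := by
  rw [← iteratedDeriv_one, iteratedDeriv_eq_of_eqOn_comp_div_sub
    (contDiff_infty.1 (contDiff_of_hasDerivAt_betaWeight hρ) 1) isOpen_Ioo hg hx,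
    iteratedDeriv_one, (hρ _).deriv]
  ring

lemma iteratedDeriv_three_eq_of_eqOn_comp_div_sub
    (hρ : ∀ y, HasDerivAt ρ (2772 * betaWeight y) y)
    (hg : EqOn g (fun z => ρ ((z - α) / β)) (Ioo α (β + α))) (hx : x ∈ Ioo α (β + α)) :
    iteratedDeriv 3 g x = 2772 * iteratedDeriv 2 betaWeight ((x - α) / β) / β ^ 3 := by
  rw [iteratedDeriv_eq_of_eqOn_comp_div_sub
    (contDiff_infty.1 (contDiff_of_hasDerivAt_betaWeight hρ) 3) isOpen_Ioo hg hx,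
    iteratedDeriv_three_eq_of_hasDerivAt_betaWeight hρ]
  ring

lemma sq_iteratedDeriv_three_div_deriv_le (hρ : ∀ y, HasDerivAt ρ (2772 * betaWeight y) y)
    (hβ : 0 < β) (hg : EqOn g (fun z => ρ ((z - α) / β)) (Ioo α (β + α)))
    (hx : x ∈ Ioo α (β + α)) :
    (iteratedDeriv 3 g x) ^ 2 / deriv g x ≤ 277200 / β ^ 5 := by
  set t := (x - α) / β
  have ht₀ : 0 ≤ t := div_nonneg (by linarith [hx.1]) hβ.le
  have ht₁ : t ≤ 1 := (div_le_one hβ).2 (by linarith [hx.2])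
  rw [deriv_eq_of_eqOn_comp_div_sub hρ hg hx,
    iteratedDeriv_three_eq_of_eqOn_comp_div_sub hρ hg hx]
  calc (2772 * iteratedDeriv 2 betaWeight t / β ^ 3) ^ 2 / (2772 * betaWeight t / β)
      = 2772 / β ^ 5 * ((iteratedDeriv 2 betaWeight t) ^ 2 / betaWeight t) := by
        field_simp
    _ ≤ 2772 / β ^ 5 * 100 := by
        gcongr
        exact div_le_of_le_mul₀ (betaWeight_nonneg ht₀ ht₁) (by norm_num)
          (sq_iteratedDeriv_two_betaWeight_le ht₀ ht₁)
    _ = 277200 / β ^ 5 := by ring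

lemma le_deriv_of_mem_Icc (hρ : ∀ y, HasDerivAt ρ (2772 * betaWeight y) y) (hβ : 0 < β)
    {a a' : ℝ} (ha : 0 < a) (ha' : 0 < a')
    (hg : EqOn g (fun z => ρ ((z - α) / β)) (Ioo α (β + α)))
    (hx : x ∈ Icc (α + a) (α + β - a')) :
    2772 * ((a / β) ^ 5 * (a' / β) ^ 5) / β ≤ deriv g x := by
  rw [deriv_eq_of_eqOn_comp_div_sub hρ hg ⟨by linarith [hx.1], by linarith [hx.2]⟩]
  have hat : a / β ≤ (x - α) / β := by gcongr; linarith [hx.1]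
  have hat' : a' / β ≤ 1 - (x - α) / β := by
    rw [le_sub_iff_add_le, ← add_div, div_le_one hβ]; linarith [hx.2]
  gcongr
  exact pow_mul_pow_le_betaWeight (by positivity) (by positivity) hat hat'

end Cutoff

theorem stmt_6 (ε b : ℝ) (hε : 0 < ε) (hb : 0 < b)
    (ρ : ℝ → ℝ) (χ : ℝ → ℝ → ℝ → ℝ)
    (hρ : ∀ x : ℝ, ρ x = 2772 * ∫ y in (0:ℝ)..x, y ^ 5 * (1 - y) ^ 5)
    (hχ : ∀ α β x : ℝ, 0 < α → 0 < β → χ α β x =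
      if x ≤ α then 0 else if x < β + α then ρ ((x - α) / β) else 1) :
    ∃ c : ℝ, ∀ x ∈ Set.Ioo ε (b + ε),
      (iteratedDeriv 3 (χ ε b) x) ^ 2 / deriv (χ ε b) x
        ≤ c * deriv (χ (ε / 3) (b + ε)) x := by
  have hρ' := hasDerivAt_of_eq_integral_betaWeight hρ
  have hχ' (α β : ℝ) (hα : 0 < α) (hβ : 0 < β) :
      EqOn (χ α β) (fun z => ρ ((z - α) / β)) (Ioo α (β + α)) := fun x hx => by
    rw [hχ α β x hα hβ, if_neg hx.1.not_ge, if_pos hx.2]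
  set m := 2772 * ((2 * ε / 3 / (b + ε)) ^ 5 * (ε / 3 / (b + ε)) ^ 5) / (b + ε)
  have hm : 0 < m := by positivity
  refine ⟨277200 / b ^ 5 / m, fun x hx => ?_⟩
  have hlow : m ≤ deriv (χ (ε / 3) (b + ε)) x :=
    le_deriv_of_mem_Icc hρ' (by positivity) (by positivity) (by positivity)
      (hχ' _ _ (by positivity) (by positivity)) ⟨by linarith [hx.1], by linarith [hx.2]⟩
  calc _ ≤ 277200 / b ^ 5 := sq_iteratedDeriv_three_div_deriv_le hρ' hb (hχ' ε b hε hb) hx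
    _ = 277200 / b ^ 5 / m * m := by field_simp
    _ ≤ _ := by gcongr
end

section
/- Let n ∈ ℤ⁺ and ε, b > 0, and χₙ(x;ε,b) = xⁿχ(x;ε,b). For each j = 1,2,3,4,5 there exists a constant c = c(n,j,b) such that |χₙ⁽ʲ⁾(x;ε,b)| ≤ c·(1 + χₙ(x;ε,b)) for all x ∈ ℝ. -/
open MeasureTheory intervalIntegral Set
open Filter Topology

/-!
Write `u₊ = max u 0`. The function `smoothstep u = 2772 ∫₀ᵘ y₊⁵ (1 - y)₊⁵ dy` is `C⁵`, since
`u ↦ u₊ᵏ⁺¹` is `Cᵏ`; it agrees with `ρ` on `[0, 1]`, vanishes on `(-∞, 0]` and equals `1` on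
`[1, ∞)`. Hence `χ x = smoothstep ((x - ε) / b)` and `χₙ` is `C⁵`. Its `j`-th derivative vanishes
left of `ε`, equals `n(n-1)⋯(n-j+1) xⁿ⁻ʲ ≤ n(n-1)⋯(n-j+1) (1 + xⁿ)` right of `b + ε`, and is
bounded on the compact interval `[ε, b + ε]`; as `χₙ ≥ 0`, all three cases give the bound.
-/

lemma hasDerivAt_max_zero_pow (m : ℕ) (x : ℝ) :
    HasDerivAt (fun x : ℝ => max x 0 ^ (m + 2)) ((m + 2) * max x 0 ^ (m + 1)) x := by
  refine hasDerivAt_of_hasDerivAt_of_ne' (g := fun x : ℝ => (m + 2) * max x 0 ^ (m + 1))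
    (x := 0) (fun y hy => ?_) (by fun_prop) (by fun_prop) x
  rcases hy.lt_or_gt with hy | hy
  · have hzero : (fun x : ℝ => max x 0 ^ (m + 2)) =ᶠ[𝓝 y] fun _ => 0 := by
      filter_upwards [Iio_mem_nhds hy] with z (hz : z < 0)
      simp [max_eq_right hz.le]
    simpa [max_eq_right hy.le] using (hasDerivAt_const y (0 : ℝ)).congr_of_eventuallyEq hzero
  · have hpow : (fun x : ℝ => max x 0 ^ (m + 2)) =ᶠ[𝓝 y] fun x => x ^ (m + 2) := by
      filter_upwards [Ioi_mem_nhds hy] with z (hz : 0 < z)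
      rw [max_eq_left (le_of_lt hz)]
    simpa [max_eq_left hy.le] using (hasDerivAt_pow (m + 2) y).congr_of_eventuallyEq hpow

theorem contDiff_max_zero_pow (k : ℕ) : ContDiff ℝ k (fun x : ℝ => max x 0 ^ (k + 1)) := by
  induction k with
  | zero => exact contDiff_zero.2 (by fun_prop)
  | succ k ih =>
    rw [Nat.cast_succ, contDiff_succ_iff_deriv]
    refine ⟨fun x => (hasDerivAt_max_zero_pow k x).differentiableAt, by simp, ?_⟩
    rw [funext fun x => (hasDerivAt_max_zero_pow k x).deriv]
    exact contDiff_const.mul ih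

theorem contDiff_primitive {E : Type*} [NormedAddCommGroup E] [NormedSpace ℝ E] [CompleteSpace E]
    {g : ℝ → E} {k : ℕ} (hg : ContDiff ℝ k g) (a : ℝ) :
    ContDiff ℝ (k + 1) (fun u => ∫ y in a..u, g y) := by
  have hderiv : ∀ u, HasDerivAt (fun u => ∫ y in a..u, g y) (g u) u := fun u =>
    (hg.continuous.integral_hasStrictDerivAt a u).hasDerivAt
  rw [contDiff_succ_iff_deriv]
  refine ⟨fun u => (hderiv u).differentiableAt, by simp, ?_⟩
  rwa [funext fun u => (hderiv u).deriv]

lemma integral_beta_six_six : ∫ y in (0:ℝ)..1, y ^ 5 * (1 - y) ^ 5 = 1 / 2772 := by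
  have e : ∀ y : ℝ, y ^ 5 * (1 - y) ^ 5
      = y ^ 5 - 5 * y ^ 6 + 10 * y ^ 7 - 10 * y ^ 8 + 5 * y ^ 9 - y ^ 10 := fun y => by ring
  simp only [e]
  rw [intervalIntegral.integral_sub, intervalIntegral.integral_add,
    intervalIntegral.integral_sub, intervalIntegral.integral_add,
    intervalIntegral.integral_sub]
  all_goals first
    | exact Continuous.intervalIntegrable (by fun_prop) 0 1
    | norm_num [intervalIntegral.integral_const_mul, integral_pow]

noncomputable def smoothstep (u : ℝ) : ℝ :=
  2772 * ∫ y in (0:ℝ)..u, max y 0 ^ 5 * max (1 - y) 0 ^ 5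

theorem contDiff_smoothstep : ContDiff ℝ 5 smoothstep := by
  have h := contDiff_max_zero_pow 4
  exact contDiff_const.mul
    (contDiff_primitive (h.mul (h.comp (contDiff_const.sub contDiff_id))) 0)

lemma smoothstep_of_nonpos {u : ℝ} (hu : u ≤ 0) : smoothstep u = 0 := by
  rw [smoothstep, integral_symm, integral_congr (g := fun _ => (0 : ℝ)) fun y hy => ?_]
  · simp
  · rw [uIcc_of_le hu] at hy
    simp [max_eq_right hy.2]

lemma smoothstep_of_mem_Icc {u : ℝ} (hu : u ∈ Icc (0 : ℝ) 1) :
    smoothstep u = 2772 * ∫ y in (0:ℝ)..u, y ^ 5 * (1 - y) ^ 5 := by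
  rw [smoothstep, integral_congr fun y hy => ?_]
  rw [uIcc_of_le hu.1] at hy
  simp only [max_eq_left hy.1, max_eq_left (sub_nonneg.2 (hy.2.trans hu.2))]

lemma smoothstep_of_one_le {u : ℝ} (hu : 1 ≤ u) : smoothstep u = 1 := by
  have hcont : Continuous fun y : ℝ => max y 0 ^ 5 * max (1 - y) 0 ^ 5 := by fun_prop
  have htail : ∫ y in (1:ℝ)..u, max y 0 ^ 5 * max (1 - y) 0 ^ 5 = 0 := by
    rw [integral_congr (g := fun _ => (0 : ℝ)) fun y hy => ?_]
    · simp
    · rw [uIcc_of_le hu] at hy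
      simp [max_eq_right (sub_nonpos.2 hy.1)]
  have hone : smoothstep 1 = 1 := by
    rw [smoothstep_of_mem_Icc (right_mem_Icc.2 zero_le_one), integral_beta_six_six]
    norm_num
  rw [← hone, smoothstep, smoothstep, ← integral_add_adjacent_intervals
    (hcont.intervalIntegrable 0 1) (hcont.intervalIntegrable 1 u), htail, add_zero]

lemma smoothstep_nonneg (u : ℝ) : 0 ≤ smoothstep u := by
  rcases le_total u 0 with hu | hu
  · rw [smoothstep_of_nonpos hu]
  · exact mul_nonneg (by norm_num) (integral_nonneg hu fun y _ => by positivity)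

lemma pow_le_one_add_pow {x : ℝ} (hx : 0 ≤ x) {m n : ℕ} (hmn : m ≤ n) : x ^ m ≤ 1 + x ^ n := by
  rcases le_total x 1 with h1 | h1
  · linarith [pow_le_one₀ hx h1 (n := m), pow_nonneg hx n]
  · linarith [pow_le_pow_right₀ h1 hmn]

theorem exists_abs_iteratedDeriv_le_mul_one_add {f : ℝ → ℝ} {k j n : ℕ} {a r : ℝ}
    (hf : ContDiff ℝ k f) (hjk : j ≤ k) (hf_nonneg : ∀ x, 0 ≤ f x)
    (hleft : ∀ x < a, f x = 0) (hr : 0 ≤ r) (hright : ∀ x > r, f x = x ^ n) :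
    ∃ c, ∀ x, |iteratedDeriv j f x| ≤ c * (1 + f x) := by
  obtain ⟨C, hC⟩ := (isCompact_Icc (a := a) (b := r)).exists_bound_of_continuousOn
    (hf.continuous_iteratedDeriv j (by exact_mod_cast hjk)).continuousOn
  set d : ℝ := (n.descFactorial j : ℝ)
  refine ⟨max C d, fun x => ?_⟩
  have hd : 0 ≤ d := Nat.cast_nonneg _
  have hfx : 1 ≤ 1 + f x := le_add_of_nonneg_right (hf_nonneg x)
  rcases lt_or_ge x a with hxa | hxa
  · have hzero : f =ᶠ[𝓝 x] fun _ => 0 := eventually_of_mem (Iio_mem_nhds hxa) hleft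
    rw [hzero.iteratedDeriv_eq, iteratedDeriv_fun_const_zero, abs_zero]
    nlinarith [le_max_right C d]
  rcases le_or_gt x r with hxr | hxr
  · calc |iteratedDeriv j f x| ≤ C := hC x ⟨hxa, hxr⟩
      _ ≤ max C d * 1 := by simp
      _ ≤ max C d * (1 + f x) := by gcongr
  · have hpow : f =ᶠ[𝓝 x] fun x => x ^ n := eventually_of_mem (Ioi_mem_nhds hxr) hright
    have hx : 0 ≤ x := hr.trans hxr.le
    rw [hpow.iteratedDeriv_eq, iteratedDeriv_pow, abs_of_nonneg (by positivity), hright x hxr]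
    exact mul_le_mul (le_max_right C d) (pow_le_one_add_pow hx (Nat.sub_le n j))
      (by positivity) (hd.trans (le_max_right C d))

lemma smoothstep_sub_div_eq_ite {ε b : ℝ} (hb : 0 < b) (x : ℝ) :
    smoothstep ((x - ε) / b) = if x ≤ ε then 0 else if x < b + ε then
      2772 * ∫ y in (0:ℝ)..(x - ε) / b, y ^ 5 * (1 - y) ^ 5 else 1 := by
  split_ifs with h₁ h₂
  · exact smoothstep_of_nonpos (div_nonpos_of_nonpos_of_nonneg (by linarith) hb.le)
  · refine smoothstep_of_mem_Icc ⟨div_nonneg (by linarith) hb.le, ?_⟩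
    rw [div_le_one hb]; linarith
  · exact smoothstep_of_one_le (by rw [le_div_iff₀ hb]; linarith)

theorem stmt_10_general (n : ℕ) (ε b : ℝ) (hε : 0 < ε) (hb : 0 < b)
    (ρ χ χn : ℝ → ℝ)
    (hρ : ∀ x : ℝ, ρ x = 2772 * ∫ y in (0:ℝ)..x, y ^ 5 * (1 - y) ^ 5)
    (hχ : ∀ x : ℝ, χ x =
      if x ≤ ε then 0 else if x < b + ε then ρ ((x - ε) / b) else 1)
    (hχn : ∀ x : ℝ, χn x = x ^ n * χ x) :
    ∀ j : ℕ, 1 ≤ j → j ≤ 5 →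
      ∃ c : ℝ, ∀ x : ℝ, |iteratedDeriv j χn x| ≤ c * (1 + χn x) := by
  intro j _ hj5
  have hχn' : χn = fun x => x ^ n * smoothstep ((x - ε) / b) := by
    ext x
    rw [hχn, hχ, hρ, smoothstep_sub_div_eq_ite hb]
  rw [hχn']
  refine exists_abs_iteratedDeriv_le_mul_one_add (k := 5) (n := n) (a := ε) (r := b + ε)
    ((contDiff_id.pow n).mul
      (contDiff_smoothstep.comp ((contDiff_id.sub contDiff_const).div_const b)))
    (by exact_mod_cast hj5) (fun x => ?_) (fun x hx => ?_) (by linarith) (fun x hx => ?_)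
  · rcases le_total x ε with hx | hx
    · simp [smoothstep_of_nonpos (div_nonpos_of_nonpos_of_nonneg (sub_nonpos.2 hx) hb.le)]
    · exact mul_nonneg (pow_nonneg (hε.le.trans hx) n) (smoothstep_nonneg _)
  · simp [smoothstep_of_nonpos (div_nonpos_of_nonpos_of_nonneg (sub_nonpos.2 hx.le) hb.le)]
  · simp [smoothstep_of_one_le ((le_div_iff₀ hb).2 (by linarith : 1 * b ≤ x - ε))]

theorem stmt_10 (n : ℕ) (hn : 1 ≤ n) (ε b : ℝ) (hε : 0 < ε) (hb : 0 < b)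
    (ρ χ χn : ℝ → ℝ)
    (hρ : ∀ x : ℝ, ρ x = 2772 * ∫ y in (0:ℝ)..x, y ^ 5 * (1 - y) ^ 5)
    (hχ : ∀ x : ℝ, χ x =
      if x ≤ ε then 0 else if x < b + ε then ρ ((x - ε) / b) else 1)
    (hχn : ∀ x : ℝ, χn x = x ^ n * χ x) :
    ∀ j : ℕ, 1 ≤ j → j ≤ 5 →
      ∃ c : ℝ, ∀ x : ℝ, |iteratedDeriv j χn x| ≤ c * (1 + χn x) :=
  stmt_10_general n ε b hε hb ρ χ χn hρ hχ hχn
end
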